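/- Let f be an (n−1)-variable Boolean function and let f̄(x_1,…,x_n) = x_n + f(x_1,…,x_{n−1}). Then FAI𝒞(f) ≤ FAI𝒞(f̄) ≤ FAI𝒞(f) + 2, where FAI𝒞(h) := min(FAI(h), FAI(1+h)). -/

import Mathlib

open scoped BigOperators

abbrev BF (n : ℕ) := (Fin n → ZMod 2) → ZMod 2

/-- Algebraic degree of a Boolean function: the least `d` such that `f` is
represented by a multivariate polynomial of total degree at most `d`. -/
noncomputable def degB {n : ℕ} (f : BF n) : ℕ :=
  sInf {d | ∃ p : MvPolynomial (Fin n) (ZMod 2),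
    (∀ x, MvPolynomial.eval x p = f x) ∧ p.totalDegree ≤ d}

/-- Fast algebraic immunity. -/
noncomputable def FAI {n : ℕ} (f : BF n) : ℕ :=
  sInf {m | ∃ g : BF n, g ≠ 1 ∧ f * g ≠ 0 ∧ m = degB g + degB (f * g)}

/-- Minimum degree of a nonzero annihilator. -/
noncomputable def LDA {n : ℕ} (f : BF n) : ℕ :=
  sInf {m | ∃ g : BF n, g ≠ 0 ∧ f * g = 0 ∧ m = degB g}

noncomputable def AI {n : ℕ} (f : BF n) : ℕ := min (LDA f) (LDA (1 + f))

noncomputable def muk {n : ℕ} (k : ℕ) (f : BF n) : ℕ :=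
  sInf {m | ∃ g : BF n, degB g ≤ k ∧ f * g ≠ 0 ∧ m = degB (f * g)}

def wtB {n : ℕ} (f : BF n) : ℕ := (Finset.univ.filter (fun x => f x = 1)).card

def IsAffineAut {n : ℕ} (A : (Fin n → ZMod 2) → (Fin n → ZMod 2)) : Prop :=
  ∃ (L : (Fin n → ZMod 2) ≃ₗ[ZMod 2] (Fin n → ZMod 2)) (b : Fin n → ZMod 2),
    ∀ x, A x = L x + b

noncomputable def RMcode (n e : ℕ) :
    Submodule (ZMod 2) ((Fin n → ZMod 2) → ZMod 2) :=
  Submodule.span (ZMod 2) {f | ∃ p : MvPolynomial (Fin n) (ZMod 2),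
    p.totalDegree ≤ e ∧ ∀ x, MvPolynomial.eval x p = f x}

/-- The code obtained by keeping only the coordinates in `S`
(i.e. puncturing on the complement of `S`). -/
noncomputable def restrictCode {n : ℕ}
    (C : Submodule (ZMod 2) ((Fin n → ZMod 2) → ZMod 2))
    (S : Set (Fin n → ZMod 2)) : Submodule (ZMod 2) (S → ZMod 2) :=
  C.map (LinearMap.funLeft (ZMod 2) (ZMod 2) (Subtype.val : S → (Fin n → ZMod 2)))

noncomputable def dualCode {ι : Type*} [Fintype ι]
    (C : Submodule (ZMod 2) (ι → ZMod 2)) : Submodule (ZMod 2) (ι → ZMod 2) where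
  carrier := {w | ∀ c ∈ C, ∑ i, w i * c i = 0}
  add_mem' := by
    intro a b ha hb c hc
    simp only [Pi.add_apply, add_mul, Finset.sum_add_distrib, ha c hc, hb c hc, add_zero]
  zero_mem' := by intro c hc; simp
  smul_mem' := by
    intro r a ha c hc
    simp only [Pi.smul_apply, smul_eq_mul, mul_assoc, ← Finset.mul_sum, ha c hc, mul_zero]

noncomputable instance instFintypeSubsetBF {α : Type*} [Fintype α] (S : Set α) :
    Fintype ↥S := Fintype.ofFinite _

def suppB {n : ℕ} (f : BF n) : Set (Fin n → ZMod 2) := {x | f x = 1}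


noncomputable def FAIc {n : ℕ} (h : BF n) : ℕ := min (FAI h) (FAI (1 + h))

/-!
Write `z = (x, y)` with `y` the last coordinate, so that `f̄` is `f` on `y = 0` and `1 + f` on
`y = 1`, and `1 + f̄` is the extension of `1 + f`.

Upper bound: if `g` is optimal for `f`, then `G = (1 + y) g(x)` has `f̄ G = (1 + y) (f g)(x)`, so
both degrees grow by at most one.

Lower bound: take an optimal pair `(G, f̄ G)` and a hyperplane `y = c` on which `f̄ G` does not
vanish. Restricting to a hyperplane does not raise degrees, so unless `G` restricts to `1` there
we get a pair for `f` or `1 + f`. Otherwise the other restriction `G₁` of `G`, or the derivative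
`1 + G₁` of `G` in the direction of `y` (whose degree is below `deg G`), is a pair for `1 + f`,
except when `G` is the indicator of the hyperplane. Then `deg (f̄ G) > deg f`, and the affine
witness `FAI f ≤ deg f + 2` closes the gap.
-/

namespace MvPolynomial

theorem eval_bind₁ {R σ τ : Type*} [CommSemiring R] (x : τ → R) (φ : σ → MvPolynomial τ R)
    (p : MvPolynomial σ R) : eval x (bind₁ φ p) = eval (fun i => eval x (φ i)) p :=
  eval₂Hom_bind₁ _ _ _ _

theorem totalDegree_bind₁_le {R σ τ : Type*} [CommSemiring R] {φ : σ → MvPolynomial τ R}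
    (hφ : ∀ i, (φ i).totalDegree ≤ 1) (p : MvPolynomial σ R) :
    (bind₁ φ p).totalDegree ≤ p.totalDegree := by
  conv_lhs => rw [p.as_sum]
  rw [map_sum]
  refine totalDegree_finsetSum_le fun s hs => ?_
  rw [bind₁_monomial]
  refine (totalDegree_mul _ _).trans ?_
  rw [totalDegree_C, zero_add]
  refine (totalDegree_finsetProd _ _).trans (le_trans ?_ (le_totalDegree hs))
  refine Finset.sum_le_sum fun i _ => (totalDegree_pow _ _).trans ?_
  simpa using Nat.mul_le_mul_left (s i) (hφ i)

-- Only monomials containing the last variable survive, and each loses at least one degree.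
theorem totalDegree_bind₁_snoc_one_sub_zero_le {R : Type*} [CommRing R] [Nontrivial R] {n : ℕ}
    (p : MvPolynomial (Fin (n + 1)) R) :
    (bind₁ (Fin.snoc X 1) p - bind₁ (Fin.snoc X 0) p).totalDegree ≤ p.totalDegree - 1 := by
  conv_lhs => rw [p.as_sum]
  rw [map_sum, map_sum, ← Finset.sum_sub_distrib]
  refine totalDegree_finsetSum_le fun s hs => ?_
  have hprod (c : MvPolynomial (Fin n) R) :
      ∏ i ∈ s.support, (Fin.snoc X c : Fin (n + 1) → MvPolynomial (Fin n) R) i ^ s i =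
        (∏ j : Fin n, X j ^ s j.castSucc) * c ^ s (Fin.last n) := by
    rw [Finset.prod_subset (Finset.subset_univ _)
      (fun i _ hi => by rw [Finsupp.notMem_support_iff.mp hi, pow_zero]),
      Fin.prod_univ_castSucc]
    simp only [Fin.snoc_castSucc, Fin.snoc_last]
  rw [bind₁_monomial, bind₁_monomial, hprod, hprod, ← mul_sub]
  rcases Nat.eq_zero_or_pos (s (Fin.last n)) with hk | hk
  · rw [hk, pow_zero, pow_zero, sub_self, mul_zero, totalDegree_zero]
    exact Nat.zero_le _
  rw [one_pow, zero_pow hk.ne', mul_zero, sub_zero, mul_one]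
  refine (totalDegree_mul _ _).trans ?_
  rw [totalDegree_C, zero_add]
  refine (totalDegree_finsetProd _ _).trans ?_
  have hdeg := le_totalDegree hs
  rw [Finsupp.sum_fintype _ _ (fun _ => rfl), Fin.sum_univ_castSucc] at hdeg
  simp only [totalDegree_X_pow]
  omega

end MvPolynomial

open MvPolynomial

section Degree

variable {n : ℕ}

theorem degB_le_of_eval_eq {f : BF n} {p : MvPolynomial (Fin n) (ZMod 2)}
    (h : ∀ x, eval x p = f x) : degB f ≤ p.totalDegree :=
  Nat.sInf_le ⟨p, h, le_rfl⟩

theorem exists_eval_eq_totalDegree_eq_degB (f : BF n) :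
    ∃ p : MvPolynomial (Fin n) (ZMod 2), (∀ x, eval x p = f x) ∧ p.totalDegree = degB f := by
  obtain ⟨p, -, hp⟩ : f ∈ (restrictDegree (Fin n) (ZMod 2) (Fintype.card (ZMod 2) - 1)).map
      (evalₗ (ZMod 2) (Fin n)) := by
    rw [map_restrict_dom_evalₗ]; trivial
  obtain ⟨q, hq, hqd⟩ : degB f ∈ {d | ∃ p : MvPolynomial (Fin n) (ZMod 2),
      (∀ x, eval x p = f x) ∧ p.totalDegree ≤ d} :=
    Nat.sInf_mem ⟨p.totalDegree, p, fun x => congrFun hp x, le_rfl⟩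
  exact ⟨q, hq, le_antisymm hqd (degB_le_of_eval_eq hq)⟩

theorem degB_mul_le (f g : BF n) : degB (f * g) ≤ degB f + degB g := by
  obtain ⟨p, hp, hpd⟩ := exists_eval_eq_totalDegree_eq_degB f
  obtain ⟨q, hq, hqd⟩ := exists_eval_eq_totalDegree_eq_degB g
  rw [← hpd, ← hqd]
  exact (degB_le_of_eval_eq (p := p * q) fun x => by simp [hp, hq]).trans (totalDegree_mul p q)

theorem degB_one_add_le (f : BF n) : degB (1 + f) ≤ degB f := by
  obtain ⟨p, hp, hpd⟩ := exists_eval_eq_totalDegree_eq_degB f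
  rw [← hpd]
  refine (degB_le_of_eval_eq (p := 1 + p) fun x => by simp [hp]).trans ?_
  simpa using totalDegree_add 1 p

theorem degB_apply_add_const_le (i : Fin n) (c : ZMod 2) : degB (fun x => x i + c) ≤ 1 := by
  refine (degB_le_of_eval_eq (p := X i + C c) fun x => by simp).trans ?_
  simpa using totalDegree_add (X i : MvPolynomial (Fin n) (ZMod 2)) (C c)

theorem degB_comp_le {k : ℕ} (F : BF n) {φ : Fin n → MvPolynomial (Fin k) (ZMod 2)}
    (hφ : ∀ i, (φ i).totalDegree ≤ 1) :
    degB (fun x => F (fun i => eval x (φ i))) ≤ degB F := by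
  obtain ⟨p, hp, hpd⟩ := exists_eval_eq_totalDegree_eq_degB F
  rw [← hpd]
  exact (degB_le_of_eval_eq fun x => by rw [eval_bind₁, hp]).trans (totalDegree_bind₁_le hφ p)

theorem eval_comp_snoc_X (x : Fin n → ZMod 2) (c : MvPolynomial (Fin n) (ZMod 2)) :
    (fun i => eval x ((Fin.snoc X c : Fin (n + 1) → MvPolynomial (Fin n) (ZMod 2)) i)) =
      Fin.snoc x (eval x c) := by
  rw [← Function.comp_def, Fin.comp_snoc]
  congr 1
  funext i
  exact eval_X ..

theorem degB_comp_init_le (f : BF n) :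
    degB (fun z : Fin (n + 1) → ZMod 2 => f (Fin.init z)) ≤ degB f := by
  have h := degB_comp_le f (φ := fun i => X i.castSucc) fun i => (totalDegree_X _).le
  simp only [eval_X] at h
  exact h

def restrictLast (c : ZMod 2) (F : BF (n + 1)) : BF n := fun x => F (Fin.snoc x c)

theorem degB_restrictLast_le (c : ZMod 2) (F : BF (n + 1)) : degB (restrictLast c F) ≤ degB F := by
  have hφ (i : Fin (n + 1)) :
      ((Fin.snoc X (C c) : Fin (n + 1) → MvPolynomial (Fin n) (ZMod 2)) i).totalDegree ≤ 1 := by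
    refine Fin.lastCases ?_ (fun j => ?_) i <;> simp
  show degB (fun x => F (Fin.snoc x c)) ≤ _
  simpa [eval_comp_snoc_X] using degB_comp_le F hφ

def derivLast (F : BF (n + 1)) : BF n := restrictLast 0 F + restrictLast 1 F

theorem degB_lt_of_derivLast_ne_zero {F : BF (n + 1)} (hF : derivLast F ≠ 0) :
    degB (derivLast F) < degB F := by
  obtain ⟨p, hp, hpd⟩ := exists_eval_eq_totalDegree_eq_degB F
  have hle : degB (derivLast F) ≤ degB F - 1 := by
    refine (degB_le_of_eval_eq fun x => ?_).trans
      (hpd ▸ totalDegree_bind₁_snoc_one_sub_zero_le p)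
    rw [map_sub, eval_bind₁, eval_bind₁, eval_comp_snoc_X, eval_comp_snoc_X, hp, hp, map_one,
      map_zero, CharTwo.sub_eq_add, add_comm]
    rfl
  have hpos : 0 < degB F := by
    refine Nat.pos_of_ne_zero fun h0 => hF ?_
    have hC := totalDegree_eq_zero_iff_eq_C.mp (hpd.trans h0)
    funext x
    show F (Fin.snoc x 0) + F (Fin.snoc x 1) = 0
    rw [← hp, ← hp, hC, eval_C, eval_C, CharTwo.add_self_eq_zero]
  omega

end Degree

section FastAlgebraicImmunity

variable {n : ℕ}

theorem BF.mul_self (h : BF n) : h * h = h :=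
  funext fun x => by
    show h x * h x = h x
    generalize h x = a
    revert a
    decide

theorem BF.exists_eq_one_of_ne_zero {h : BF n} (h0 : h ≠ 0) : ∃ x, h x = 1 := by
  obtain ⟨x, hx⟩ := Function.ne_iff.mp h0
  exact ⟨x, Fin.eq_one_of_ne_zero _ hx⟩

theorem BF.exists_eq_zero_of_ne_one {h : BF n} (h1 : h ≠ 1) : ∃ x, h x = 0 := by
  obtain ⟨x, hx⟩ := Function.ne_iff.mp h1
  refine ⟨x, ?_⟩
  change h x ≠ 1 at hx
  generalize h x = a at hx
  revert a
  decide

theorem FAI_le {h g : BF n} (hg : g ≠ 1) (hhg : h * g ≠ 0) : FAI h ≤ degB g + degB (h * g) :=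
  Nat.sInf_le ⟨g, hg, hhg, rfl⟩

theorem FAI_zero : FAI (0 : BF n) = 0 := by
  rw [FAI]
  convert Nat.sInf_empty
  exact Set.eq_empty_of_forall_notMem fun k ⟨g, _, hg, _⟩ => hg (zero_mul g)

theorem exists_FAI_eq {h : BF n} (hS : ∃ g, g ≠ 1 ∧ h * g ≠ 0) :
    ∃ g, g ≠ 1 ∧ h * g ≠ 0 ∧ FAI h = degB g + degB (h * g) := by
  obtain ⟨g, hg, hhg⟩ := hS
  exact Nat.sInf_mem (s := {m | ∃ g : BF n, g ≠ 1 ∧ h * g ≠ 0 ∧ m = degB g + degB (h * g)})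
    ⟨_, g, hg, hhg, rfl⟩

theorem le_FAI {h : BF n} {k : ℕ} (h0 : h ≠ 0) (h1 : h ≠ 1)
    (hk : ∀ g, g ≠ 1 → h * g ≠ 0 → k ≤ degB g + degB (h * g)) : k ≤ FAI h := by
  obtain ⟨g, hg, hhg, heq⟩ := exists_FAI_eq ⟨h, h1, by rwa [BF.mul_self]⟩
  exact heq ▸ hk g hg hhg

theorem FAI_le_degB_add_two {h : BF n} (h0 : h ≠ 0) (h1 : h ≠ 1) : FAI h ≤ degB h + 2 := by
  obtain ⟨a, ha⟩ := BF.exists_eq_one_of_ne_zero h0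
  obtain ⟨b, hb⟩ := BF.exists_eq_zero_of_ne_one h1
  obtain ⟨i, hi⟩ := Function.ne_iff.mp (show a ≠ b by rintro rfl; simp [ha] at hb)
  -- an affine function equal to `1` at `a` and `0` at `b`
  set g : BF n := fun x => x i + (a i + 1)
  have hg : g ≠ 1 := fun hg => by
    have hgb : b i + (a i + 1) = 1 := congrFun hg b
    revert hi hgb
    generalize a i = u
    generalize b i = v
    revert u v
    decide
  have hhg : h * g ≠ 0 := fun hhg => by
    have := congrFun hhg a
    simp [g, ha, CharTwo.add_cancel_left] at this
  have := FAI_le hg hhg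
  have := degB_mul_le h g
  have : degB g ≤ 1 := degB_apply_add_const_le i (a i + 1)
  omega

theorem FAIc_one_add (h : BF n) : FAIc (1 + h) = FAIc h := by
  rw [FAIc, FAIc, CharTwo.add_cancel_left, min_comm]

end FastAlgebraicImmunity

section Extension

variable {m : ℕ}

theorem restrictLast_mul (c : ZMod 2) (F G : BF (m + 1)) :
    restrictLast c (F * G) = restrictLast c F * restrictLast c G :=
  rfl

theorem eq_of_restrictLast_eq {F G : BF (m + 1)} (c : ZMod 2)
    (h₀ : restrictLast c F = restrictLast c G)
    (h₁ : restrictLast (c + 1) F = restrictLast (c + 1) G) : F = G := by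
  funext z
  rw [← Fin.snoc_init_self z]
  have hcases : ∀ c d : ZMod 2, d = c ∨ d = c + 1 := by decide
  obtain hz | hz := hcases c (z (Fin.last m))
  · rw [hz]; exact congrFun h₀ _
  · rw [hz]; exact congrFun h₁ _

theorem restrictLast_add_restrictLast_add_one (c : ZMod 2) (F : BF (m + 1)) :
    restrictLast c F + restrictLast (c + 1) F = derivLast F := by
  obtain rfl | rfl : c = 0 ∨ c = 1 := by revert c; decide
  · rfl
  · exact add_comm _ _

/-- The function `f̄` of the paper. -/
def bar (f : BF m) : BF (m + 1) := fun z => z (Fin.last m) + f (Fin.init z)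

theorem bar_snoc (f : BF m) (x : Fin m → ZMod 2) (c : ZMod 2) :
    bar f (Fin.snoc x c) = c + f x := by
  simp [bar]

theorem bar_one_add (f : BF m) : bar (1 + f) = 1 + bar f :=
  funext fun z => by
    show z (Fin.last m) + (1 + f (Fin.init z)) = 1 + (z (Fin.last m) + f (Fin.init z))
    ring

theorem bar_ne_zero (f : BF m) : bar f ≠ 0 := fun h => by
  have := congrFun h (Fin.snoc 0 (1 + f 0))
  rw [bar_snoc, add_assoc, CharTwo.add_self_eq_zero, add_zero] at this
  exact one_ne_zero this

theorem bar_ne_one (f : BF m) : bar f ≠ 1 := fun h => by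
  have := congrFun h (Fin.snoc 0 (f 0))
  rw [bar_snoc, CharTwo.add_self_eq_zero] at this
  exact zero_ne_one this

theorem restrictLast_add_one_bar (c : ZMod 2) (f : BF m) :
    restrictLast (c + 1) (bar f) = 1 + restrictLast c (bar f) :=
  funext fun x => by
    simp only [restrictLast, bar_snoc, Pi.add_apply, Pi.one_apply]
    ring

theorem FAIc_restrictLast_bar (c : ZMod 2) (f : BF m) :
    FAIc (restrictLast c (bar f)) = FAIc f := by
  obtain rfl | rfl : c = 0 ∨ c = 1 := by revert c; decide
  · congr 1
    funext x
    simp [restrictLast, bar_snoc]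
  · rw [← FAIc_one_add f]
    congr 1
    funext x
    simp [restrictLast, bar_snoc]

theorem FAIc_le_of_restrictLast_eq_one {G H : BF (m + 1)} {f : BF m} {c : ZMod 2}
    (hG₀ : restrictLast c G = 1) (hG₁ : restrictLast (c + 1) G ≠ 1)
    (hfG₁ : (1 + f) * restrictLast (c + 1) G = 0) (hf0 : f ≠ 0) (hH : derivLast H = f) :
    FAIc f ≤ degB G + degB H := by
  set G₁ := restrictLast (c + 1) G
  have hdG : derivLast G = 1 + G₁ := by rw [← restrictLast_add_restrictLast_add_one c, hG₀]
  have hdegH := degB_lt_of_derivLast_ne_zero (hH ▸ hf0)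
  rw [hH] at hdegH
  have hf : FAIc f ≤ FAI f := min_le_left _ _
  have hf' : FAIc f ≤ FAI (1 + f) := min_le_right _ _
  rcases eq_or_ne f 1 with hf1 | hf1
  · have : FAI (1 + f) = 0 := by rw [hf1, CharTwo.add_self_eq_zero, FAI_zero]
    omega
  rcases eq_or_ne G₁ 0 with hG₁0 | hG₁0
  · -- `G` is the indicator of the hyperplane `z_last = c`
    rw [hG₁0, add_zero] at hdG
    have hdegG := degB_lt_of_derivLast_ne_zero (hdG ▸ one_ne_zero)
    have := FAI_le_degB_add_two hf0 hf1
    omega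
  · -- `(1 + f) * (1 + G₁) = 1 + f`, so the derivative of `G` is a witness for `1 + f`
    have hg : derivLast G ≠ 1 := by rwa [hdG, Ne, add_eq_left]
    have hfg : (1 + f) * derivLast G = 1 + f := by rw [hdG, mul_add, mul_one, hfG₁, add_zero]
    have h1f : 1 + f ≠ 0 := by rwa [Ne, CharTwo.add_eq_zero, eq_comm]
    have hFAI := FAI_le hg (hfg ▸ h1f)
    rw [hfg] at hFAI
    have hdegG := degB_lt_of_derivLast_ne_zero (F := G) (hdG ▸ by
      rwa [Ne, CharTwo.add_eq_zero, eq_comm])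
    have := degB_one_add_le f
    omega

theorem FAIc_restrictLast_le {F G : BF (m + 1)} {c : ZMod 2}
    (hF : restrictLast (c + 1) F = 1 + restrictLast c F) (hG : G ≠ 1)
    (hFG : restrictLast c (F * G) ≠ 0) :
    FAIc (restrictLast c F) ≤ degB G + degB (F * G) := by
  set f := restrictLast c F
  set G₀ := restrictLast c G
  set G₁ := restrictLast (c + 1) G
  have hH₀ : restrictLast c (F * G) = f * G₀ := rfl
  have hH₁ : restrictLast (c + 1) (F * G) = (1 + f) * G₁ := by rw [restrictLast_mul, hF]
  have hdegG₀ : degB G₀ ≤ degB G := degB_restrictLast_le c G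
  have hdegG₁ : degB G₁ ≤ degB G := degB_restrictLast_le (c + 1) G
  have hdegH₀ := degB_restrictLast_le c (F * G)
  have hdegH₁ := degB_restrictLast_le (c + 1) (F * G)
  rw [hH₀] at hFG hdegH₀
  rw [hH₁] at hdegH₁
  rcases ne_or_eq G₀ 1 with hG₀ | hG₀
  · exact (min_le_left _ _).trans ((FAI_le hG₀ hFG).trans (by omega))
  have hG₁ : G₁ ≠ 1 := fun h => hG (eq_of_restrictLast_eq c hG₀ h)
  rcases ne_or_eq ((1 + f) * G₁) 0 with hH₁0 | hH₁0
  · exact (min_le_right _ _).trans ((FAI_le hG₁ hH₁0).trans (by omega))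
  rw [hG₀, mul_one] at hFG
  refine FAIc_le_of_restrictLast_eq_one hG₀ hG₁ hH₁0 hFG ?_
  rw [← restrictLast_add_restrictLast_add_one c, hH₀, hH₁, hG₀, hH₁0, mul_one, add_zero]

theorem FAIc_le_FAI_bar (f : BF m) : FAIc f ≤ FAI (bar f) := by
  refine le_FAI (bar_ne_zero f) (bar_ne_one f) fun G hG hH => ?_
  obtain ⟨c, hc⟩ : ∃ c, restrictLast c (bar f * G) ≠ 0 := by
    by_contra! h
    exact hH (eq_of_restrictLast_eq 0 (h 0) (h 1))
  rw [← FAIc_restrictLast_bar c]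
  exact FAIc_restrictLast_le (restrictLast_add_one_bar c f) hG hc

theorem FAI_bar_le_of_exists {f : BF m} (hS : ∃ g, g ≠ 1 ∧ f * g ≠ 0) :
    FAI (bar f) ≤ FAI f + 2 := by
  obtain ⟨g, hg, hfg, hFAI⟩ := exists_FAI_eq hS
  -- `G` is `g` on the hyperplane `z_last = 0` and vanishes off it, where `bar f = f`
  set G : BF (m + 1) := fun z => (z (Fin.last m) + 1) * g (Fin.init z)
  have hbarG : bar f * G = fun z => (z (Fin.last m) + 1) * (f * g) (Fin.init z) :=
    funext fun z => by
      show (z (Fin.last m) + f (Fin.init z)) * ((z (Fin.last m) + 1) * g (Fin.init z)) =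
        (z (Fin.last m) + 1) * (f (Fin.init z) * g (Fin.init z))
      generalize z (Fin.last m) = y
      generalize f (Fin.init z) = a
      generalize g (Fin.init z) = b
      revert y a b
      decide
  have hG : G ≠ 1 := fun h => by
    have := congrFun h (Fin.snoc 0 1)
    simp [G, CharTwo.add_self_eq_zero] at this
  have hbarG0 : bar f * G ≠ 0 := by
    obtain ⟨x, hx⟩ := Function.ne_iff.mp hfg
    rw [hbarG]
    intro h
    simpa using hx (by simpa using congrFun h (Fin.snoc x 0))
  have hdegG : degB G ≤ 1 + degB g :=
    (degB_mul_le _ _).trans (add_le_add (degB_apply_add_const_le _ _) (degB_comp_init_le g))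
  have hdegH : degB (bar f * G) ≤ 1 + degB (f * g) :=
    hbarG ▸ (degB_mul_le _ _).trans
      (add_le_add (degB_apply_add_const_le _ _) (degB_comp_init_le (f * g)))
  have := FAI_le hG hbarG0
  omega

theorem FAI_bar_const_le (c : ZMod 2) : FAI (bar (fun _ => c : BF m)) ≤ 2 := by
  have hFAI := FAI_le (h := bar (fun _ => c : BF m)) (bar_ne_one _)
    (by rw [BF.mul_self]; exact bar_ne_zero _)
  have hdeg : degB (bar (fun _ => c : BF m)) ≤ 1 := degB_apply_add_const_le (Fin.last m) c
  rw [BF.mul_self] at hFAI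
  omega

theorem FAI_bar_le (f : BF m) : FAI (bar f) ≤ FAI f + 2 := by
  by_cases hS : ∃ g, g ≠ 1 ∧ f * g ≠ 0
  · exact FAI_bar_le_of_exists hS
  push Not at hS
  obtain ⟨c, rfl⟩ : ∃ c, f = fun _ => c := by
    by_cases hf : f = 1
    · exact ⟨1, hf⟩
    · exact ⟨0, BF.mul_self f ▸ hS f hf⟩
  exact (FAI_bar_const_le c).trans (Nat.le_add_left 2 _)

end Extension

theorem stmt12 {m : ℕ} (f : BF m) :
    FAIc f ≤ FAIc (fun x : Fin (m + 1) → ZMod 2 =>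
      x (Fin.last m) + f (fun i => x i.castSucc)) ∧
    FAIc (fun x : Fin (m + 1) → ZMod 2 =>
      x (Fin.last m) + f (fun i => x i.castSucc)) ≤ FAIc f + 2 := by
  change FAIc f ≤ FAIc (bar f) ∧ FAIc (bar f) ≤ FAIc f + 2
  refine ⟨le_min (FAIc_le_FAI_bar f) ?_, ?_⟩
  · rw [← bar_one_add, ← FAIc_one_add f]
    exact FAIc_le_FAI_bar (1 + f)
  · rw [FAIc, FAIc, ← min_add_add_right, ← bar_one_add]
    exact min_le_min (FAI_bar_le f) (FAI_bar_le (1 + f))
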